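/- arXiv:1307.7132 — 2 statements merged into one kernel-verified Lean document; each statement's English description precedes it below -/
import Mathlib

section
/- Let G be an infinite, locally finite, connected undirected quasi-transitive graph. Then μ = μ^B, i.e., the connective constant equals the exponential growth rate of the number of backward extendable self-avoiding walks. -/
open Filter ENNReal

structure Dgraph where
  V : Type
  E : Type
  src : E → V
  tgt : E → V

namespace Dgraph

variable (G : Dgraph)

/-- Every vertex has finite in-degree and out-degree. -/
def LocallyFinite : Prop :=
  ∀ v : G.V, {e : G.E | G.src e = v}.Finite ∧ {e : G.E | G.tgt e = v}.Finite

/-- There is a directed edge from `u` to `v`. -/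
def Adj (u v : G.V) : Prop := ∃ e : G.E, G.src e = u ∧ G.tgt e = v

/-- Directed walks exist between any ordered pair of vertices. -/
def StronglyConnected : Prop := ∀ u v : G.V, Relation.ReflTransGen G.Adj u v

/-- An automorphism of a directed multigraph. -/
structure Aut where
  vmap : G.V ≃ G.V
  emap : G.E ≃ G.E
  src_eq : ∀ e, G.src (emap e) = vmap (G.src e)
  tgt_eq : ∀ e, G.tgt (emap e) = vmap (G.tgt e)

/-- `u` and `v` are in the same transitivity class. -/
def SameOrbit (u v : G.V) : Prop := ∃ φ : G.Aut, φ.vmap u = v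

/-- Finitely many transitivity classes. -/
def QuasiTransitive : Prop := ∃ S : Finset G.V, ∀ v : G.V, ∃ s ∈ S, G.SameOrbit s v

def VertexTransitive : Prop := ∀ u v : G.V, G.SameOrbit u v

/-- The orbit of `v` under the stabiliser of `u`. -/
def stabOrbit (u v : G.V) : Set G.V := {w | ∃ φ : G.Aut, φ.vmap u = u ∧ φ.vmap v = w}

/-- Unimodularity: the weight function is constant on transitivity classes,
equivalently `|stab(u)v| = |stab(v)u|` whenever `u, v` are in the same orbit. -/
def Unimodular : Prop := ∀ u v : G.V, G.SameOrbit u v →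
  Nat.card (G.stabOrbit u v) = Nat.card (G.stabOrbit v u)

/-- The edge-reversal of `G`. -/
def rev : Dgraph := ⟨G.V, G.E, G.tgt, G.src⟩

/-- Each edge has a reverse edge: `G` represents an undirected graph. -/
def Undirected : Prop := ∃ ι : G.E ≃ G.E, ∀ e : G.E,
  G.src (ι e) = G.tgt e ∧ G.tgt (ι e) = G.src e ∧ ι (ι e) = e

/-- An `n`-step self-avoiding walk starting at `v`, directed away from `v`. -/
@[ext]
structure SAW (n : ℕ) (v : G.V) where
  vs : Fin (n + 1) → G.V
  es : Fin n → G.E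
  hsrc : ∀ i : Fin n, G.src (es i) = vs i.castSucc
  htgt : ∀ i : Fin n, G.tgt (es i) = vs i.succ
  hstart : vs 0 = v
  hinj : Function.Injective vs

/-- `w` is an initial segment of a singly infinite SAW from `v`. -/
def IsFwdExt {n : ℕ} {v : G.V} (w : G.SAW n v) : Prop :=
  ∃ (vs : ℕ → G.V) (es : ℕ → G.E), Function.Injective vs ∧
    (∀ i : ℕ, G.src (es i) = vs i ∧ G.tgt (es i) = vs (i + 1)) ∧
    (∀ i : Fin (n + 1), vs i = w.vs i) ∧ (∀ i : Fin n, es i = w.es i)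

/-- `w` is the final segment of a singly infinite SAW from infinity ending at the
endpoint of `w` (indexed backwards from the endpoint). -/
def IsBwdExt {n : ℕ} {v : G.V} (w : G.SAW n v) : Prop :=
  ∃ (vs : ℕ → G.V) (es : ℕ → G.E), Function.Injective vs ∧
    (∀ i : ℕ, G.src (es i) = vs (i + 1) ∧ G.tgt (es i) = vs i) ∧
    (∀ i : Fin (n + 1), vs (n - (i : ℕ)) = w.vs i) ∧
    (∀ i : Fin n, es (n - 1 - (i : ℕ)) = w.es i)

/-- `w` is a sub-walk of a doubly infinite SAW. -/
def IsDblExt {n : ℕ} {v : G.V} (w : G.SAW n v) : Prop :=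
  ∃ (vs : ℤ → G.V) (es : ℤ → G.E), Function.Injective vs ∧
    (∀ i : ℤ, G.src (es i) = vs i ∧ G.tgt (es i) = vs (i + 1)) ∧
    ∃ k : ℤ, (∀ i : Fin (n + 1), vs (k + (i : ℕ)) = w.vs i) ∧
      (∀ i : Fin n, es (k + (i : ℕ)) = w.es i)

noncomputable def sigma (n : ℕ) (v : G.V) : ℕ := Nat.card (G.SAW n v)
noncomputable def sigmaF (n : ℕ) (v : G.V) : ℕ := Nat.card {w : G.SAW n v // G.IsFwdExt w}
noncomputable def sigmaB (n : ℕ) (v : G.V) : ℕ := Nat.card {w : G.SAW n v // G.IsBwdExt w}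
noncomputable def sigmaFB (n : ℕ) (v : G.V) : ℕ := Nat.card {w : G.SAW n v // G.IsDblExt w}

noncomputable def ssigma (n : ℕ) : ℝ≥0∞ := ⨆ v : G.V, (G.sigma n v : ℝ≥0∞)
noncomputable def ssigmaF (n : ℕ) : ℝ≥0∞ := ⨆ v : G.V, (G.sigmaF n v : ℝ≥0∞)
noncomputable def ssigmaB (n : ℕ) : ℝ≥0∞ := ⨆ v : G.V, (G.sigmaB n v : ℝ≥0∞)
noncomputable def ssigmaFB (n : ℕ) : ℝ≥0∞ := ⨆ v : G.V, (G.sigmaFB n v : ℝ≥0∞)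

/-- Undirected graph distance: length of a shortest path ignoring orientations. -/
noncomputable def udist (u v : G.V) : ℕ :=
  sInf {n : ℕ | ∃ f : Fin (n + 1) → G.V, f 0 = u ∧ f (Fin.last n) = v ∧
    ∀ i : Fin n, (∃ e, G.src e = f i.castSucc ∧ G.tgt e = f i.succ) ∨
      (∃ e, G.src e = f i.succ ∧ G.tgt e = f i.castSucc)}

end Dgraph

open Filter ENNReal

attribute [local instance] Classical.propDecidable

/-!
Cutting a walk in two shows that `ssigma` and `ssigmaB` are submultiplicative (a sub-walk of a
backward extendable walk is backward extendable), so by Fekete's lemma both growth rates exist,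
and `μ^B ≤ μ` is clear. Conversely, fix a geodesic ray `ρ` from `v` (König's lemma) and cut a SAW
`w` of length `n` from `v` at the last vertex `ρ l` it shares with the ray. The reversed initial
piece and the final piece are SAWs from `ρ l`, both backward extendable along the tail of the
ray. As `ρ` is geodesic, `l ≤ n`, so `σ_n(v) ≤ (n + 1)² max_k σ^B_k σ^B_{n-k}`, and the polynomial
factor does not change the growth rate.
-/

open Topology

theorem Nat.card_le_sum_card_subtype {α ι : Type*} [Finite α] [Fintype ι] (P : α → ι → Prop)
    (hP : ∀ a, ∃ i, P a i) : Nat.card α ≤ ∑ i, Nat.card {a // P a i} := by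
  choose g hg using hP
  calc Nat.card α ≤ Nat.card (Σ i, {a // P a i}) :=
        Nat.card_le_card_of_injective (fun a => ⟨g a, a, hg a⟩)
          fun a b h => congrArg (fun p : Σ i, {a // P a i} => p.2.val) h
    _ = ∑ i, Nat.card {a // P a i} := Nat.card_sigma

theorem Set.Infinite.exists_infinite_of_subset_biUnion {α ι : Type*} {s : Set α} {t : Set ι}
    {f : ι → Set α} (hs : s.Infinite) (ht : t.Finite) (hst : s ⊆ ⋃ i ∈ t, f i) :
    ∃ i ∈ t, (f i).Infinite := by
  by_contra! h
  exact hs ((ht.biUnion h).subset hst)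

namespace SimpleGraph

variable {V : Type*} {H : SimpleGraph V}

theorem Connected.exists_adj_dist_eq_add_one_of_infinite (hconn : H.Connected)
    (hfin : ∀ u, (H.neighborSet u).Finite) {v u : V}
    (hu : {w | H.dist v w = H.dist v u + H.dist u w}.Infinite) :
    ∃ u', H.Adj u u' ∧ H.dist v u' = H.dist v u + 1 ∧
      {w | H.dist v w = H.dist v u' + H.dist u' w}.Infinite := by
  have hcover : {w | H.dist v w = H.dist v u + H.dist u w} \ {u} ⊆
      ⋃ u' ∈ H.neighborSet u, {w | H.dist v u' = H.dist v u + 1 ∧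
        H.dist v w = H.dist v u' + H.dist u' w} := by
    rintro w ⟨hw, hwu⟩
    obtain ⟨p, hp⟩ := hconn.exists_walk_length_eq_dist u w
    cases p with
    | nil => exact absurd rfl hwu
    | @cons _ u' _ hadj q =>
      have h1 : H.dist u' w ≤ q.length := dist_le q
      have h2 := hconn.dist_triangle (u := v) (v := u) (w := u')
      have h3 := hconn.dist_triangle (u := v) (v := u') (w := w)
      rw [dist_eq_one_iff_adj.mpr hadj] at h2
      simp only [Walk.length_cons] at hp
      replace hw : H.dist v w = H.dist v u + H.dist u w := hw
      exact Set.mem_biUnion hadj ⟨by omega, by omega⟩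
  obtain ⟨u', hadj, hinf⟩ := ((hu.sdiff (Set.finite_singleton u)).exists_infinite_of_subset_biUnion
    (hfin u) hcover)
  exact ⟨u', hadj, hinf.nonempty.some_mem.1, hinf.mono fun w hw => hw.2⟩

/-- König's argument: step repeatedly to a neighbour that still lies on geodesics from `v` to
infinitely many vertices. -/
theorem Connected.exists_geodesic_ray [Infinite V] (hconn : H.Connected)
    (hfin : ∀ u, (H.neighborSet u).Finite) (v : V) :
    ∃ ρ : ℕ → V, ρ 0 = v ∧ (∀ k, H.dist v (ρ k) = k) ∧ ∀ k, H.Adj (ρ k) (ρ (k + 1)) := by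
  let Good := {u : V // {w | H.dist v w = H.dist v u + H.dist u w}.Infinite}
  choose next hadj hdist using fun u : Good =>
    hconn.exists_adj_dist_eq_add_one_of_infinite hfin u.2
  let step : Good → Good := fun u => ⟨next u, (hdist u).2⟩
  let start : Good := ⟨v, by simpa using Set.infinite_univ⟩
  refine ⟨fun k => (step^[k] start).1, rfl, fun k => ?_, fun k => ?_⟩
  · induction k with
    | zero => exact dist_self
    | succ k ih =>
      dsimp only at ih ⊢
      rw [Function.iterate_succ_apply']
      exact (hdist _).1.trans (congrArg (· + 1) ih)
  · dsimp only
    rw [Function.iterate_succ_apply']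
    exact hadj _

end SimpleGraph

theorem exists_le_add_mul_of_tendsto_div {w : ℕ → ℝ} {β γ : ℝ}
    (hw : Tendsto (fun n => w n / n) atTop (𝓝 β)) (hγ : β < γ) :
    ∃ C, ∀ n, w n ≤ C + γ * n := by
  obtain ⟨K, hK⟩ := eventually_atTop.mp ((hw.eventually (gt_mem_nhds hγ)).and
    (eventually_gt_atTop 0))
  refine ⟨∑ j ∈ Finset.range K, |w j - γ * j|, fun n => ?_⟩
  rcases lt_or_ge n K with hn | hn
  · have := Finset.single_le_sum (fun j _ => abs_nonneg (w j - γ * j)) (Finset.mem_range.mpr hn)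
    linarith [le_abs_self (w n - γ * n)]
  · obtain ⟨hlt, hpos⟩ := hK n hn
    rw [div_lt_iff₀ (Nat.cast_pos.mpr hpos)] at hlt
    linarith [Finset.sum_nonneg fun j (_ : j ∈ Finset.range K) => abs_nonneg (w j - γ * j)]

theorem le_of_le_add_split {u w c : ℕ → ℝ} {α β : ℝ}
    (hu : Tendsto (fun n => u n / n) atTop (𝓝 α)) (hw : Tendsto (fun n => w n / n) atTop (𝓝 β))
    (hc : Tendsto (fun n => c n / n) atTop (𝓝 0))
    (hsplit : ∀ n, ∃ k ≤ n, u n ≤ c n + (w k + w (n - k))) : α ≤ β := by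
  refine le_of_forall_gt_imp_ge_of_dense fun γ hγ => ?_
  obtain ⟨C, hC⟩ := exists_le_add_mul_of_tendsto_div hw hγ
  have hlim : Tendsto (fun n : ℕ => c n / n + 2 * C / n + γ) atTop (𝓝 (0 + 0 + γ)) :=
    (hc.add (tendsto_const_div_atTop_nhds_zero_nat _)).add tendsto_const_nhds
  rw [zero_add, zero_add] at hlim
  refine le_of_tendsto_of_tendsto hu hlim (eventually_atTop.mpr ⟨1, fun n hn => ?_⟩)
  obtain ⟨k, hk, hle⟩ := hsplit n
  have hn' : (0 : ℝ) < n := Nat.cast_pos.mpr hn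
  have hsum : (k : ℝ) + ((n - k : ℕ) : ℝ) = n := by rw [Nat.cast_sub hk]; ring
  have hrhs : c n / n + 2 * C / n + γ = (c n + 2 * C + γ * n) / n := by field_simp
  show u n / n ≤ c n / n + 2 * C / n + γ
  rw [hrhs, div_le_div_iff_of_pos_right hn']
  linarith [hC k, hC (n - k), show γ * k + γ * (n - k : ℕ) = γ * n by rw [← mul_add, hsum]]

theorem tendsto_log_add_one_div_natCast :
    Tendsto (fun n : ℕ => Real.log ((n : ℝ) + 1) / n) atTop (𝓝 0) := by
  have := (Real.tendsto_pow_log_div_mul_add_atTop 1 (-1) 1 one_ne_zero).comp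
    (tendsto_atTop_add_const_right atTop 1 tendsto_natCast_atTop_atTop)
  refine this.congr fun n => ?_
  simp

namespace ENNReal

variable {a b : ℕ → ℝ≥0∞} {α β : ℝ}

theorem exists_tendsto_log_toReal_div_of_le_mul (h1 : ∀ n, 1 ≤ a n) (htop : ∀ n, a n ≠ ⊤)
    (hmul : ∀ m n, a (m + n) ≤ a m * a n) :
    ∃ L, Tendsto (fun n : ℕ => Real.log (a n).toReal / n) atTop (𝓝 L) := by
  have hone : ∀ n, 1 ≤ (a n).toReal := fun n => by
    simpa using toReal_mono (htop n) (h1 n)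
  have hsub : Subadditive fun n => Real.log (a n).toReal := fun m n => by
    rw [← Real.log_mul (by linarith [hone m]) (by linarith [hone n]), ← toReal_mul]
    exact Real.log_le_log (by linarith [hone (m + n)])
      (toReal_mono (mul_ne_top (htop m) (htop n)) (hmul m n))
  exact ⟨_, hsub.tendsto_lim ⟨0, by
    rintro _ ⟨n, rfl⟩
    exact div_nonneg (Real.log_nonneg (hone n)) n.cast_nonneg⟩⟩

theorem tendsto_rpow_one_div_of_tendsto_log_toReal_div (h0 : ∀ n, a n ≠ 0) (htop : ∀ n, a n ≠ ⊤)
    {L : ℝ} (hL : Tendsto (fun n : ℕ => Real.log (a n).toReal / n) atTop (𝓝 L)) :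
    Tendsto (fun n : ℕ => a n ^ (1 / (n : ℝ))) atTop (𝓝 (ENNReal.ofReal (Real.exp L))) := by
  refine ((continuous_ofReal.tendsto _).comp ((Real.continuous_exp.tendsto _).comp hL)).congr
    fun n => ?_
  have hpos : 0 < (a n).toReal := toReal_pos (h0 n) (htop n)
  rw [Function.comp_apply, Function.comp_apply, ← mul_one_div, ← Real.rpow_def_of_pos hpos,
    ← ofReal_rpow_of_pos hpos, ofReal_toReal (htop n)]

theorem le_of_tendsto_log_toReal_div_of_le (hb0 : ∀ n, b n ≠ 0) (hatop : ∀ n, a n ≠ ⊤)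
    (hba : ∀ n, b n ≤ a n)
    (hb : Tendsto (fun n : ℕ => Real.log (b n).toReal / n) atTop (𝓝 β))
    (ha : Tendsto (fun n : ℕ => Real.log (a n).toReal / n) atTop (𝓝 α)) : β ≤ α :=
  le_of_tendsto_of_tendsto' hb ha fun n => div_le_div_of_nonneg_right
    (Real.log_le_log (toReal_pos (hb0 n) (ne_top_of_le_ne_top (hatop n) (hba n)))
      (toReal_mono (hatop n) (hba n))) n.cast_nonneg

theorem le_of_forall_exists_le_sq_mul (ha0 : ∀ n, a n ≠ 0) (hb0 : ∀ n, b n ≠ 0)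
    (hbtop : ∀ n, b n ≠ ⊤)
    (ha : Tendsto (fun n : ℕ => Real.log (a n).toReal / n) atTop (𝓝 α))
    (hb : Tendsto (fun n : ℕ => Real.log (b n).toReal / n) atTop (𝓝 β))
    (hsplit : ∀ n, ∃ k ≤ n, a n ≤ ((n : ℝ≥0∞) + 1) ^ 2 * (b k * b (n - k))) : α ≤ β := by
  have hc : Tendsto (fun n : ℕ => Real.log (((n : ℝ) + 1) ^ 2) / n) atTop (𝓝 0) := by
    simpa [Real.log_pow, mul_div_assoc] using tendsto_log_add_one_div_natCast.const_mul 2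
  refine le_of_le_add_split ha hb hc fun n => ?_
  obtain ⟨k, hk, hle⟩ := hsplit n
  have hb0' : ∀ j, 0 < (b j).toReal := fun j => toReal_pos (hb0 j) (hbtop j)
  have hrhs : ((n : ℝ≥0∞) + 1) ^ 2 * (b k * b (n - k)) ≠ ⊤ := by
    simp [mul_ne_top, hbtop]
  have hreal : (a n).toReal ≤ ((n : ℝ) + 1) ^ 2 * ((b k).toReal * (b (n - k)).toReal) := by
    simpa [toReal_mul, toReal_pow, toReal_add] using toReal_mono hrhs hle
  refine ⟨k, hk, ?_⟩
  rw [← Real.log_mul (hb0' k).ne' (hb0' (n - k)).ne', ← Real.log_mul (by positivity)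
    (_root_.mul_pos (hb0' k) (hb0' (n - k))).ne']
  exact Real.log_le_log (toReal_pos (ha0 n) (ne_top_of_le_ne_top hrhs hle)) hreal

end ENNReal

namespace Dgraph

variable {G : Dgraph}

theorem Undirected.adj_symm (hund : G.Undirected) {u w : G.V} (h : G.Adj u w) : G.Adj w u := by
  obtain ⟨ι, hι⟩ := hund
  obtain ⟨e, rfl, rfl⟩ := h
  exact ⟨ι e, (hι e).1, (hι e).2.1⟩

noncomputable def Undirected.flip (hund : G.Undirected) : G.E ≃ G.E := hund.choose

theorem Undirected.src_flip (hund : G.Undirected) (e : G.E) : G.src (hund.flip e) = G.tgt e :=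
  (hund.choose_spec e).1

theorem Undirected.tgt_flip (hund : G.Undirected) (e : G.E) : G.tgt (hund.flip e) = G.src e :=
  (hund.choose_spec e).2.1

def Aut.symm (φ : G.Aut) : G.Aut where
  vmap := φ.vmap.symm
  emap := φ.emap.symm
  src_eq e := by rw [Equiv.eq_symm_apply, ← φ.src_eq, Equiv.apply_symm_apply]
  tgt_eq e := by rw [Equiv.eq_symm_apply, ← φ.tgt_eq, Equiv.apply_symm_apply]

variable (G) in
def toSimpleGraph : SimpleGraph G.V := SimpleGraph.fromRel G.Adj

theorem LocallyFinite.finite_neighborSet (hlf : G.LocallyFinite) (u : G.V) :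
    (G.toSimpleGraph.neighborSet u).Finite := by
  refine (((hlf u).1.image G.tgt).union ((hlf u).2.image G.src)).subset ?_
  rintro x ⟨-, ⟨e, he, rfl⟩ | ⟨e, rfl, he⟩⟩
  · exact Or.inl ⟨e, he, rfl⟩
  · exact Or.inr ⟨e, he, rfl⟩

theorem StronglyConnected.connected_toSimpleGraph [Nonempty G.V] (hsc : G.StronglyConnected) :
    G.toSimpleGraph.Connected := by
  refine SimpleGraph.Connected.mk fun u w => ?_
  induction hsc u w with
  | refl => rfl
  | @tail x y _ hxy ih =>
    by_cases h : x = y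
    · exact h ▸ ih
    · exact ih.trans (SimpleGraph.Adj.reachable ⟨h, Or.inl hxy⟩)

namespace SAW

variable {n : ℕ} {u v : G.V}

theorem ext_of_es {w w' : G.SAW n v} (h : w.es = w'.es) : w = w' := by
  have hvs : w.vs = w'.vs := by
    funext i
    cases i using Fin.cases with
    | zero => rw [w.hstart, w'.hstart]
    | succ i => rw [← w.htgt, ← w'.htgt, h]
  exact SAW.ext hvs h

def copy (w : G.SAW n u) (h : u = v) : G.SAW n v :=
  ⟨w.vs, w.es, w.hsrc, w.htgt, w.hstart.trans h, w.hinj⟩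

theorem pred_copy_iff (P : ∀ {n : ℕ} {v : G.V}, G.SAW n v → Prop) (w : G.SAW n u)
    (h : u = v) : P (w.copy h) ↔ P w := by
  subst h
  rfl

def take (w : G.SAW n v) (k : ℕ) (hk : k ≤ n) : G.SAW k v where
  vs i := w.vs ⟨i, by omega⟩
  es i := w.es ⟨i, by omega⟩
  hsrc i := w.hsrc ⟨i, by omega⟩
  htgt i := w.htgt ⟨i, by omega⟩
  hstart := w.hstart
  hinj i j h := Fin.ext (Fin.mk.inj (w.hinj h))

def drop (w : G.SAW n v) (k len : ℕ) (h : k + len = n) : G.SAW len (w.vs ⟨k, by omega⟩) where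
  vs i := w.vs ⟨k + i, by omega⟩
  es i := w.es ⟨k + i, by omega⟩
  hsrc i := w.hsrc ⟨k + i, by omega⟩
  htgt i := w.htgt ⟨k + i, by omega⟩
  hstart := rfl
  hinj i j h := Fin.ext (by simpa using Fin.mk.inj (w.hinj h))

noncomputable def reverse (hund : G.Undirected) (w : G.SAW n v) :
    G.SAW n (w.vs (Fin.last n)) where
  vs i := w.vs i.rev
  es i := hund.flip (w.es i.rev)
  hsrc i := by rw [hund.src_flip, w.htgt, Fin.rev_castSucc]
  htgt i := by rw [hund.tgt_flip, w.hsrc, Fin.rev_succ]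
  hstart := by rw [Fin.rev_zero]
  hinj := w.hinj.comp Fin.rev_injective

theorem es_eq_of_reverse_es_eq {hund : G.Undirected} {w : G.SAW n u} {w' : G.SAW n v}
    (h : (w.reverse hund).es = (w'.reverse hund).es) : w.es = w'.es :=
  funext fun i => hund.flip.injective (by simpa [reverse] using congrFun h i.rev)

theorem eq_of_take_drop {w w' : G.SAW n v} {k len : ℕ} (h : k + len = n)
    (htake : (w.take k (by omega)).es = (w'.take k (by omega)).es)
    (hdrop : (w.drop k len h).es = (w'.drop k len h).es) : w = w' := by
  refine ext_of_es (funext fun i => ?_)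
  rcases lt_or_ge i.val k with hi | hi
  · exact congrFun htake ⟨i, hi⟩
  · have := congrFun hdrop ⟨i - k, by omega⟩
    simp only [drop, Nat.add_sub_cancel' hi] at this
    exact this

def map (φ : G.Aut) (w : G.SAW n v) : G.SAW n (φ.vmap v) where
  vs i := φ.vmap (w.vs i)
  es i := φ.emap (w.es i)
  hsrc i := by rw [φ.src_eq, w.hsrc]
  htgt i := by rw [φ.tgt_eq, w.htgt]
  hstart := congrArg φ.vmap w.hstart
  hinj := φ.vmap.injective.comp w.hinj

theorem map_injective (φ : G.Aut) : Function.Injective (map φ : G.SAW n v → _) :=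
  fun _ _ h => ext_of_es (funext fun i => φ.emap.injective (congrFun (congrArg SAW.es h) i))

end SAW

variable {n : ℕ} {v : G.V}

theorem IsBwdExt.take {w : G.SAW n v} (hw : G.IsBwdExt w) (k : ℕ) (hk : k ≤ n) :
    G.IsBwdExt (w.take k hk) := by
  obtain ⟨vs, es, hinj, hedge, hvs, hes⟩ := hw
  refine ⟨fun j => vs (j + (n - k)), fun j => es (j + (n - k)),
    hinj.comp (add_left_injective _), fun j => ?_, fun i => ?_, fun i => ?_⟩
  · simpa only [add_right_comm] using hedge (j + (n - k))
  · have := i.isLt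
    simpa [SAW.take, show k - i + (n - k) = n - i by omega] using hvs ⟨i, by omega⟩
  · have := i.isLt
    simpa [SAW.take, show k - 1 - i + (n - k) = n - 1 - i by omega] using hes ⟨i, by omega⟩

theorem IsBwdExt.drop {w : G.SAW n v} (hw : G.IsBwdExt w) (k len : ℕ) (h : k + len = n) :
    G.IsBwdExt (w.drop k len h) := by
  obtain ⟨vs, es, hinj, hedge, hvs, hes⟩ := hw
  refine ⟨vs, es, hinj, hedge, fun i => ?_, fun i => ?_⟩
  · have := i.isLt
    simpa [SAW.drop, show n - (k + i) = len - i by omega] using hvs ⟨k + i, by omega⟩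
  · have := i.isLt
    simpa [SAW.drop, show n - 1 - (k + i) = len - 1 - i by omega] using hes ⟨k + i, by omega⟩

theorem isBwdExt_of_ray {m : ℕ} {x : G.V} (w : G.SAW m x) {ρ : ℕ → G.V} (hρ0 : ρ 0 = x)
    (hinj : Function.Injective ρ) (hadj : ∀ i, G.Adj (ρ (i + 1)) (ρ i))
    (hdisj : ∀ i j, ρ (i + 1) ≠ w.vs j) : G.IsBwdExt w := by
  choose e he using hadj
  refine ⟨fun j => if h : j ≤ m then w.vs ⟨m - j, by omega⟩ else ρ (j - m),
    fun j => if h : j < m then w.es ⟨m - 1 - j, by omega⟩ else e (j - m), ?_, fun j => ?_,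
    fun i => ?_, fun i => ?_⟩
  · intro a b hab
    dsimp only at hab
    split_ifs at hab with ha hb hb
    · have := Fin.mk.inj (w.hinj hab)
      omega
    · have := hdisj (b - m - 1) ⟨m - a, by omega⟩
      rw [show b - m - 1 + 1 = b - m by omega] at this
      exact absurd hab.symm this
    · have := hdisj (a - m - 1) ⟨m - b, by omega⟩
      rw [show a - m - 1 + 1 = a - m by omega] at this
      exact absurd hab this
    · have := hinj hab
      omega
  · by_cases hj : j < m
    · simp only [dif_pos hj, dif_pos (show j + 1 ≤ m by omega), dif_pos (show j ≤ m by omega)]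
      exact ⟨(w.hsrc _).trans (congrArg w.vs (Fin.ext (by simp; omega))),
        (w.htgt _).trans (congrArg w.vs (Fin.ext (by simp; omega)))⟩
    · simp only [dif_neg hj, dif_neg (show ¬ j + 1 ≤ m by omega)]
      refine ⟨(he _).1.trans (congrArg ρ (by omega)), (he _).2.trans ?_⟩
      split_ifs with hjm
      · rw [show j - m = 0 by omega, hρ0]
        exact w.hstart.symm.trans (congrArg w.vs (Fin.ext (by simp; omega)))
      · rfl
  · have := i.isLt
    simp [show m - i ≤ m by omega, show m - (m - i) = i by omega]
  · have := i.isLt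
    simp [show m - 1 - i < m by omega, show m - 1 - (m - 1 - i) = i by omega]

theorem exists_isBwdExt_of_ray {ρ : ℕ → G.V} (hinj : Function.Injective ρ)
    (hadj : ∀ i, G.Adj (ρ (i + 1)) (ρ i)) (n : ℕ) : ∃ w : G.SAW n (ρ n), G.IsBwdExt w := by
  choose e he using hadj
  refine ⟨⟨fun i => ρ (n - i), fun i => e (n - 1 - i), fun i => ?_, fun i => ?_, rfl,
    fun i j h => Fin.ext (by have := hinj h; omega)⟩, ρ, e, hinj, he, fun i => rfl, fun i => rfl⟩
  · exact (he _).1.trans (congrArg ρ (by simp; omega))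
  · exact (he _).2.trans (congrArg ρ (by simp; omega))

theorem LocallyFinite.finite_saw (hlf : G.LocallyFinite) (n : ℕ) (v : G.V) :
    Finite (G.SAW n v) := by
  induction n with
  | zero =>
    have : Subsingleton (G.SAW 0 v) := ⟨fun w w' => SAW.ext_of_es (funext fun i => i.elim0)⟩
    infer_instance
  | succ n ih =>
    have := ih
    have := fun w : G.SAW n v => (hlf (w.vs (Fin.last n))).1.to_subtype
    refine Finite.of_injective (β := Σ w : G.SAW n v, {e | G.src e = w.vs (Fin.last n)})
      (fun w => ⟨w.take n n.le_succ, w.es (Fin.last n), w.hsrc _⟩) fun w w' h => ?_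
    refine SAW.ext_of_es (funext fun i => ?_)
    rcases Fin.eq_castSucc_or_eq_last i with ⟨j, rfl⟩ | rfl
    · exact congrFun (congrArg (fun p : Σ w : G.SAW n v, _ => p.1.es) h) j
    · exact congrArg (fun p : Σ w : G.SAW n v, {e | G.src e = w.vs (Fin.last n)} => p.2.val) h

theorem SAW.dist_toSimpleGraph_le (w : G.SAW n v) (i : Fin (n + 1)) :
    G.toSimpleGraph.dist v (w.vs i) ≤ i := by
  obtain ⟨i, hi⟩ := i
  induction i with
  | zero => simp [w.hstart]
  | succ i ih =>
    have hadj : G.toSimpleGraph.Adj (w.vs ⟨i, by omega⟩) (w.vs ⟨i + 1, hi⟩) :=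
      ⟨fun h => by simpa using w.hinj h,
        Or.inl ⟨w.es ⟨i, by omega⟩, w.hsrc ⟨i, by omega⟩, w.htgt ⟨i, by omega⟩⟩⟩
    have := hadj.reachable.dist_triangle_right v
    rw [SimpleGraph.dist_eq_one_iff_adj.mpr hadj] at this
    have := ih (by omega)
    simp only at this ⊢
    omega

section Split

variable (P : ∀ {n : ℕ} {v : G.V}, G.SAW n v → Prop)

theorem card_take_eq_le (hlf : G.LocallyFinite)
    (hdrop : ∀ {n : ℕ} {v : G.V} (w : G.SAW n v) (k len : ℕ) (h : k + len = n),
      P w → P (w.drop k len h))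
    {m n : ℕ} (w₁ : G.SAW m v) :
    Nat.card {W : {w : G.SAW (m + n) v // P w} // W.1.take m (Nat.le_add_right m n) = w₁} ≤
      Nat.card {w : G.SAW n (w₁.vs (Fin.last m)) // P w} := by
  have := hlf.finite_saw n (w₁.vs (Fin.last m))
  refine Nat.card_le_card_of_injective
    (fun W => ⟨(W.1.1.drop m n rfl).copy (congrArg (fun w => w.vs (Fin.last m)) W.2),
      (SAW.pred_copy_iff P _ _).mpr (hdrop _ _ _ _ W.1.2)⟩) fun W W' h => ?_
  exact Subtype.ext (Subtype.ext (SAW.eq_of_take_drop rfl (by rw [W.2, W'.2])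
    (congrArg (fun q => q.1.es) h)))

theorem card_add_le_mul_iSup (hlf : G.LocallyFinite)
    (htake : ∀ {n : ℕ} {v : G.V} (w : G.SAW n v) (k : ℕ) (hk : k ≤ n), P w → P (w.take k hk))
    (hdrop : ∀ {n : ℕ} {v : G.V} (w : G.SAW n v) (k len : ℕ) (h : k + len = n),
      P w → P (w.drop k len h))
    (m n : ℕ) (v : G.V) :
    (Nat.card {w : G.SAW (m + n) v // P w} : ℝ≥0∞) ≤
      Nat.card {w : G.SAW m v // P w} * ⨆ u, (Nat.card {w : G.SAW n u // P w} : ℝ≥0∞) := by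
  have := hlf.finite_saw (m + n) v
  have := hlf.finite_saw m v
  have := Fintype.ofFinite {w : G.SAW m v // P w}
  have hm : m ≤ m + n := Nat.le_add_right m n
  have hcover := Nat.card_le_sum_card_subtype
    (fun (W : {w : G.SAW (m + n) v // P w}) (W₁ : {w : G.SAW m v // P w}) =>
      W.1.take m hm = W₁.1) fun W => ⟨⟨W.1.take m hm, htake _ _ _ W.2⟩, rfl⟩
  calc (Nat.card {w : G.SAW (m + n) v // P w} : ℝ≥0∞)
      ≤ ∑ W₁ : {w : G.SAW m v // P w},
          (Nat.card {W : {w : G.SAW (m + n) v // P w} // W.1.take m hm = W₁.1} : ℝ≥0∞) := by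
        exact_mod_cast hcover
    _ ≤ ∑ _W₁ : {w : G.SAW m v // P w}, ⨆ u, (Nat.card {w : G.SAW n u // P w} : ℝ≥0∞) :=
        Finset.sum_le_sum fun W₁ _ =>
          (Nat.cast_le.mpr (card_take_eq_le P hlf hdrop W₁.1)).trans
            (le_iSup (fun u => (Nat.card {w : G.SAW n u // P w} : ℝ≥0∞)) _)
    _ = _ := by simp [Finset.sum_const, Finset.card_univ, Nat.card_eq_fintype_card]

end Split

theorem ssigma_add_le (hlf : G.LocallyFinite) (m n : ℕ) :
    G.ssigma (m + n) ≤ G.ssigma m * G.ssigma n := by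
  refine iSup_le fun v => ?_
  have h := card_add_le_mul_iSup (fun _ => True) hlf (fun _ _ _ _ => trivial)
    (fun _ _ _ _ _ => trivial) m n v
  simp only [Nat.card_subtype_true] at h
  exact h.trans (mul_le_mul_left (le_iSup (fun u => (G.sigma m u : ℝ≥0∞)) v) _)

theorem ssigmaB_add_le (hlf : G.LocallyFinite) (m n : ℕ) :
    G.ssigmaB (m + n) ≤ G.ssigmaB m * G.ssigmaB n :=
  iSup_le fun v => (card_add_le_mul_iSup G.IsBwdExt hlf (fun _ _ _ hw => hw.take _ _)
    (fun _ _ _ _ hw => hw.drop _ _ _) m n v).trans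
      (mul_le_mul_left (le_iSup (fun u => (G.sigmaB m u : ℝ≥0∞)) v) _)

theorem sigma_le_of_sameOrbit (hlf : G.LocallyFinite) {s v : G.V} (h : G.SameOrbit s v)
    (n : ℕ) : G.sigma n v ≤ G.sigma n s := by
  obtain ⟨φ, rfl⟩ := h
  have := hlf.finite_saw n (φ.symm.vmap (φ.vmap s))
  simpa [sigma, Aut.symm] using
    Nat.card_le_card_of_injective _ (SAW.map_injective (n := n) (v := φ.vmap s) φ.symm)

theorem ssigma_ne_top (hlf : G.LocallyFinite) (hqt : G.QuasiTransitive) (n : ℕ) :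
    G.ssigma n ≠ ⊤ := by
  obtain ⟨S, hS⟩ := hqt
  refine ne_top_of_le_ne_top (natCast_ne_top (S.sup (G.sigma n))) (iSup_le fun v => ?_)
  obtain ⟨s, hs, hsv⟩ := hS v
  exact Nat.cast_le.mpr ((sigma_le_of_sameOrbit hlf hsv n).trans (Finset.le_sup hs))

theorem ssigmaB_le_ssigma (hlf : G.LocallyFinite) (n : ℕ) : G.ssigmaB n ≤ G.ssigma n :=
  iSup_mono fun v => by
    have := hlf.finite_saw n v
    exact Nat.cast_le.mpr (Finite.card_subtype_le _)

theorem exists_inward_geodesic_ray (hinf : Infinite G.V) (hlf : G.LocallyFinite)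
    (hund : G.Undirected) (hsc : G.StronglyConnected) (v : G.V) :
    ∃ ρ : ℕ → G.V, ρ 0 = v ∧ Function.Injective ρ ∧ (∀ i, G.Adj (ρ (i + 1)) (ρ i)) ∧
      ∀ {n : ℕ} (w : G.SAW n v) (l : ℕ) (i : Fin (n + 1)), ρ l = w.vs i → l ≤ n := by
  have : Nonempty G.V := ⟨v⟩
  obtain ⟨ρ, hρ0, hdist, hadj⟩ :=
    hsc.connected_toSimpleGraph.exists_geodesic_ray hlf.finite_neighborSet v
  refine ⟨ρ, hρ0, fun a b h => by rw [← hdist a, h, hdist b], fun i => ?_,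
    fun w l i h => ?_⟩
  · exact (hadj i).2.elim hund.adj_symm id
  · have := w.dist_toSimpleGraph_le i
    rw [← h, hdist] at this
    omega

theorem one_le_ssigmaB (hinf : Infinite G.V) (hlf : G.LocallyFinite) (hund : G.Undirected)
    (hsc : G.StronglyConnected) (n : ℕ) : 1 ≤ G.ssigmaB n := by
  obtain ⟨ρ, -, hinj, hadj, -⟩ :=
    exists_inward_geodesic_ray hinf hlf hund hsc (Classical.arbitrary G.V)
  obtain ⟨w, hw⟩ := exists_isBwdExt_of_ray hinj hadj n
  have := hlf.finite_saw n (ρ n)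
  have : Nonempty {w : G.SAW n (ρ n) // G.IsBwdExt w} := ⟨⟨w, hw⟩⟩
  exact le_trans (Nat.one_le_cast.mpr Nat.card_pos)
    (le_iSup (fun u => (G.sigmaB n u : ℝ≥0∞)) (ρ n))

section LastHit

variable {ρ : ℕ → G.V}

def IsLastHit (ρ : ℕ → G.V) (w : G.SAW n v) (l : ℕ) (k : Fin (n + 1)) : Prop :=
  ρ l = w.vs k ∧ ∀ l' > l, ∀ j, ρ l' ≠ w.vs j

theorem exists_isLastHit (w : G.SAW n v) (hρ0 : ρ 0 = v)
    (hfar : ∀ l i, ρ l = w.vs i → l ≤ n) : ∃ l ≤ n, ∃ k, IsLastHit ρ w l k := by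
  obtain ⟨k, hk⟩ := Nat.findGreatest_spec (P := fun l => ∃ i, ρ l = w.vs i) (Nat.zero_le n)
    ⟨0, hρ0.trans w.hstart.symm⟩
  exact ⟨_, Nat.findGreatest_le n, k, hk, fun l' hl' j h =>
    absurd (Nat.le_findGreatest (hfar l' j h) ⟨j, h⟩) (not_le.mpr hl')⟩

theorem card_isLastHit_le (hund : G.Undirected) (hlf : G.LocallyFinite)
    (hinj : Function.Injective ρ) (hadj : ∀ i, G.Adj (ρ (i + 1)) (ρ i)) (l : ℕ)
    (k : Fin (n + 1)) :
    Nat.card {w : G.SAW n v // IsLastHit ρ w l k} ≤ G.sigmaB k (ρ l) * G.sigmaB (n - k) (ρ l) := by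
  have hk : (k : ℕ) ≤ n := k.is_le
  have := hlf.finite_saw k (ρ l)
  have := hlf.finite_saw (n - k) (ρ l)
  have hray := fun {m : ℕ} (P : G.SAW m (ρ l)) => isBwdExt_of_ray P (ρ := fun i => ρ (l + i))
    (by simp) (hinj.comp (add_right_injective l)) (fun i => hadj (l + i))
  rw [sigmaB, sigmaB, ← Nat.card_prod]
  refine Nat.card_le_card_of_injective
    (fun w => (⟨((w.1.take k hk).reverse hund).copy w.2.1.symm, hray _ fun i j => ?_⟩,
      ⟨(w.1.drop k (n - k) (by omega)).copy w.2.1.symm, hray _ fun i j => ?_⟩))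
    fun w w' h => Subtype.ext (SAW.eq_of_take_drop (k := k) (len := n - k) (by omega)
      (SAW.es_eq_of_reverse_es_eq (congrArg (fun p => p.1.1.es) h))
      (congrArg (fun p => p.2.1.es) h))
  · exact w.2.2 _ (by omega) _
  · exact w.2.2 _ (by omega) _

theorem sigma_le_sum_ssigmaB_mul (hund : G.Undirected) (hlf : G.LocallyFinite)
    (hρ0 : ρ 0 = v) (hinj : Function.Injective ρ) (hadj : ∀ i, G.Adj (ρ (i + 1)) (ρ i))
    (hfar : ∀ (w : G.SAW n v) l i, ρ l = w.vs i → l ≤ n) :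
    (G.sigma n v : ℝ≥0∞) ≤
      ∑ p : Fin (n + 1) × Fin (n + 1), G.ssigmaB p.2 * G.ssigmaB (n - p.2) := by
  have := hlf.finite_saw n v
  have hcover := Nat.card_le_sum_card_subtype
    (fun w (p : Fin (n + 1) × Fin (n + 1)) => IsLastHit ρ w p.1 p.2) fun w => by
      obtain ⟨l, hl, k, hlk⟩ := exists_isLastHit w hρ0 (hfar w)
      exact ⟨(⟨l, by omega⟩, k), hlk⟩
  calc (G.sigma n v : ℝ≥0∞)
      ≤ ∑ p : Fin (n + 1) × Fin (n + 1),
          (Nat.card {w : G.SAW n v // IsLastHit ρ w p.1 p.2} : ℝ≥0∞) := by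
        exact_mod_cast hcover
    _ ≤ _ := Finset.sum_le_sum fun p _ => by
        refine (Nat.cast_le.mpr (card_isLastHit_le hund hlf hinj hadj p.1 p.2)).trans ?_
        push_cast
        exact mul_le_mul' (le_iSup (fun u => (G.sigmaB _ u : ℝ≥0∞)) _)
          (le_iSup (fun u => (G.sigmaB _ u : ℝ≥0∞)) _)

end LastHit

theorem exists_ssigma_le_sq_mul (hinf : Infinite G.V) (hlf : G.LocallyFinite)
    (hund : G.Undirected) (hsc : G.StronglyConnected) (n : ℕ) :
    ∃ k ≤ n, G.ssigma n ≤ ((n : ℝ≥0∞) + 1) ^ 2 * (G.ssigmaB k * G.ssigmaB (n - k)) := by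
  obtain ⟨k, hk, hmax⟩ := Finset.exists_max_image (Finset.range (n + 1))
    (fun k => G.ssigmaB k * G.ssigmaB (n - k)) ⟨0, by simp⟩
  refine ⟨k, Nat.lt_succ_iff.mp (Finset.mem_range.mp hk), iSup_le fun v => ?_⟩
  obtain ⟨ρ, hρ0, hinj, hadj, hfar⟩ := exists_inward_geodesic_ray hinf hlf hund hsc v
  calc (G.sigma n v : ℝ≥0∞)
      ≤ ∑ p : Fin (n + 1) × Fin (n + 1), G.ssigmaB p.2 * G.ssigmaB (n - p.2) :=
        sigma_le_sum_ssigmaB_mul hund hlf hρ0 hinj hadj hfar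
    _ ≤ ∑ _p : Fin (n + 1) × Fin (n + 1), G.ssigmaB k * G.ssigmaB (n - k) :=
        Finset.sum_le_sum fun p _ => hmax _ (Finset.mem_range.mpr p.2.isLt)
    _ = _ := by simp [sq]

end Dgraph

open Filter ENNReal

/-- for an infinite, locally finite, connected, undirected,
quasi-transitive graph, `μ = μ^B`. -/
theorem mu_eq_muB_undirected (G : Dgraph) (hinf : Infinite G.V) (hlf : G.LocallyFinite)
    (hund : G.Undirected) (hsc : G.StronglyConnected) (hqt : G.QuasiTransitive) :
    ∃ μ μB : ℝ≥0∞,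
      Tendsto (fun n : ℕ => (G.ssigma n) ^ (1 / (n : ℝ))) atTop (nhds μ) ∧
      Tendsto (fun n : ℕ => (G.ssigmaB n) ^ (1 / (n : ℝ))) atTop (nhds μB) ∧
      μ = μB := by
  have hB1 : ∀ n, 1 ≤ G.ssigmaB n := G.one_le_ssigmaB hinf hlf hund hsc
  have hBle : ∀ n, G.ssigmaB n ≤ G.ssigma n := G.ssigmaB_le_ssigma hlf
  have h1 : ∀ n, 1 ≤ G.ssigma n := fun n => (hB1 n).trans (hBle n)
  have h0 : ∀ n, G.ssigma n ≠ 0 := fun n => (one_pos.trans_le (h1 n)).ne'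
  have hB0 : ∀ n, G.ssigmaB n ≠ 0 := fun n => (one_pos.trans_le (hB1 n)).ne'
  have htop : ∀ n, G.ssigma n ≠ ⊤ := G.ssigma_ne_top hlf hqt
  have hBtop : ∀ n, G.ssigmaB n ≠ ⊤ := fun n => ne_top_of_le_ne_top (htop n) (hBle n)
  obtain ⟨α, hα⟩ := exists_tendsto_log_toReal_div_of_le_mul h1 htop (G.ssigma_add_le hlf)
  obtain ⟨β, hβ⟩ := exists_tendsto_log_toReal_div_of_le_mul hB1 hBtop (G.ssigmaB_add_le hlf)
  have hαβ : α ≤ β := le_of_forall_exists_le_sq_mul h0 hB0 hBtop hα hβ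
    (G.exists_ssigma_le_sq_mul hinf hlf hund hsc)
  have hβα : β ≤ α := le_of_tendsto_log_toReal_div_of_le hB0 htop hBle hβ hα
  exact ⟨_, _, tendsto_rpow_one_div_of_tendsto_log_toReal_div h0 htop hα,
    tendsto_rpow_one_div_of_tendsto_log_toReal_div hB0 hBtop hβ, by rw [hαβ.antisymm hβα]⟩
end

section
/- Let G be an infinite, locally finite, strongly connected, quasi-transitive directed graph that is not unimodular. Then there exist α > 0 and a doubly infinite sequence of vertices (v_i)_{i∈ℤ} such that d_G(v_i, v_j) ≥ α|i−j| for all i,j ∈ ℤ (where d_G is undirected graph distance), and for each i ≥ 0 there are directed edges from v_{i+1} to v_i and from v_{−i−1} to v_{−i}. -/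
open Filter ENNReal

open Filter ENNReal

attribute [local instance] Classical.propDecidable


/-!
Non-unimodularity gives an automorphism `φ` and a vertex `u` with `M(φu) ≠ M(u)`. The height
`η x = log (M x / M u) / log (M (φ u) / M u)` then satisfies `η (φ x) = η x + 1`, and it changes by
at most a constant along every edge, because `log (M x / M y)` is an automorphism-invariant
cocycle and there are only finitely many orbits of edges. Repeating a directed path from `φ u` to
`u` under the powers of `φ` gives a walk into `u` along which `η` grows linearly; its
loop-erasure is self-avoiding and still grows linearly. The same construction for `φ⁻¹` gives a
self-avoiding walk into `u` along which `η` decreases linearly, and gluing the two at their last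
meeting point gives a doubly infinite self-avoiding path along which `η` changes linearly. As `η`
is Lipschitz for the graph distance, this path is a quasi-geodesic.
-/

open Function Relation

def LinearlyIncreasing (h : ℕ → ℝ) : Prop :=
  ∃ β > 0, ∃ C : ℝ, 0 ≤ C ∧ ∀ a b : ℕ, a ≤ b → β * ((b : ℝ) - a) - C ≤ h b - h a

theorem abs_sub_sub_div_le_of_add_period {h : ℕ → ℝ} {p : ℕ} {L : ℝ} (hp : 0 < p)
    (hper : ∀ i, h (i + p) = h i + 1) (hstep : ∀ i, |h (i + 1) - h i| ≤ L) (t : ℕ) :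
    |h t - h 0 - t / p| ≤ L * p + 1 := by
  have hL : 0 ≤ L := (abs_nonneg _).trans (hstep 0)
  have hshift (j k : ℕ) : h (j + p * k) = h j + k := by
    induction k with
    | zero => simp
    | succ k ih => rw [mul_add, mul_one, ← add_assoc, hper, ih]; push_cast; ring
  have hdrift (j : ℕ) : |h j - h 0| ≤ L * j := by
    induction j with
    | zero => simp
    | succ j ih =>
      calc |h (j + 1) - h 0| ≤ |h (j + 1) - h j| + |h j - h 0| := abs_sub_le _ _ _
        _ ≤ L * (j + 1 : ℕ) := by push_cast; linarith [hstep j]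
  have hp' : (0 : ℝ) < p := by exact_mod_cast hp
  have hmod : ((t % p : ℕ) : ℝ) ≤ p := by exact_mod_cast (Nat.mod_lt t hp).le
  have hdecomp : h t - h 0 - t / p = (h (t % p) - h 0) - (t % p : ℕ) / p := by
    conv_lhs => rw [← Nat.mod_add_div t p, hshift]
    rw [← Nat.mod_add_div t p]
    push_cast
    field_simp
    ring
  have hfrac : |((t % p : ℕ) : ℝ) / p| ≤ 1 := by
    rw [abs_of_nonneg (by positivity)]
    exact div_le_one_of_le₀ hmod hp'.le
  rw [hdecomp]
  exact (abs_sub _ _).trans (add_le_add ((hdrift _).trans (by gcongr)) hfrac)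

theorem linearlyIncreasing_of_add_period {h : ℕ → ℝ} {p : ℕ} {L : ℝ} (hp : 0 < p)
    (hper : ∀ i, h (i + p) = h i + 1) (hstep : ∀ i, |h (i + 1) - h i| ≤ L) :
    LinearlyIncreasing h := by
  have hL : 0 ≤ L := (abs_nonneg _).trans (hstep 0)
  refine ⟨1 / p, by positivity, 2 * (L * p + 1), by positivity, fun a b _ => ?_⟩
  have ha := abs_le.1 (abs_sub_sub_div_le_of_add_period hp hper hstep a)
  have hb := abs_le.1 (abs_sub_sub_div_le_of_add_period hp hper hstep b)
  have : 1 / (p : ℝ) * (b - a) = b / p - a / p := by ring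
  linarith [ha.1, ha.2, hb.1, hb.2]

theorem LinearlyIncreasing.comp_strictMono {h : ℕ → ℝ} (hh : LinearlyIncreasing h)
    {n : ℕ → ℕ} (hn : StrictMono n) : LinearlyIncreasing (h ∘ n) := by
  obtain ⟨β, hβ, C, hC0, hC⟩ := hh
  refine ⟨β, hβ, C, hC0, fun a b hab => ?_⟩
  have hgap : b - a + n a ≤ n b := by
    induction b, hab using Nat.le_induction with
    | base => simp
    | succ b hab ih => have := hn (show b < b + 1 by omega); omega
  have hgap' : (b : ℝ) - a ≤ n b - n a := by
    have : ((b - a + n a : ℕ) : ℝ) ≤ n b := by exact_mod_cast hgap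
    push_cast [hab] at this
    linarith
  calc β * ((b : ℝ) - a) - C ≤ β * ((n b : ℝ) - n a) - C := by gcongr
    _ ≤ _ := hC _ _ (hn.monotone hab)

theorem LinearlyIncreasing.comp_add {h : ℕ → ℝ} (hh : LinearlyIncreasing h) (s : ℕ) :
    LinearlyIncreasing fun n => h (s + n) :=
  hh.comp_strictMono (strictMono_id.const_add s)

theorem LinearlyIncreasing.bddAbove_setOf_eq {α : Type*} {η : α → ℝ} {w : ℕ → α}
    (hw : LinearlyIncreasing (η ∘ w)) (t : ℕ) : BddAbove {s | w s = w t} := by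
  obtain ⟨β, hβ, C, hC0, hC⟩ := hw
  refine ⟨⌈(t : ℝ) + C / β⌉₊, fun s hs => ?_⟩
  suffices (s : ℝ) ≤ t + C / β by exact_mod_cast this.trans (Nat.le_ceil _)
  rcases le_total s t with hst | hts
  · have : (s : ℝ) ≤ t := by exact_mod_cast hst
    linarith [div_nonneg hC0 hβ.le]
  · have h := hC t s hts
    rw [comp_apply, comp_apply, show w s = w t from hs, sub_self] at h
    rw [← sub_le_iff_le_add', le_div_iff₀ hβ]
    linarith

theorem exists_mul_abs_sub_le_abs_sub {g : ℤ → ℝ} (hpos : LinearlyIncreasing fun n : ℕ => g n)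
    (hneg : LinearlyIncreasing fun n : ℕ => -g (-n)) :
    ∃ β > 0, ∃ C : ℝ, ∀ i j : ℤ, β * |(i : ℝ) - j| - C ≤ |g i - g j| := by
  obtain ⟨β₁, hβ₁, C₁, hC₁0, hC₁⟩ := hpos
  obtain ⟨β₂, hβ₂, C₂, hC₂0, hC₂⟩ := hneg
  refine ⟨min β₁ β₂, lt_min hβ₁ hβ₂, C₁ + C₂, fun i j => ?_⟩
  wlog hji : j ≤ i generalizing i j
  · rw [abs_sub_comm, abs_sub_comm (g i)]
    exact this j i (le_of_not_ge hji)
  have hji' : (j : ℝ) ≤ i := by exact_mod_cast hji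
  rw [abs_of_nonneg (sub_nonneg.2 hji')]
  refine le_trans ?_ (le_abs_self _)
  have hβ₁' := min_le_left β₁ β₂
  have hβ₂' := min_le_right β₁ β₂
  rcases le_or_gt 0 j with hj | hj
  · lift i to ℕ using hj.trans hji
    lift j to ℕ using hj
    have := hC₁ j i (by exact_mod_cast hji)
    push_cast at this hji' ⊢
    nlinarith [mul_le_mul_of_nonneg_right hβ₁' (sub_nonneg.2 hji')]
  rcases le_or_gt i 0 with hi | hi
  · obtain ⟨m, rfl⟩ := Int.exists_eq_neg_ofNat hi
    obtain ⟨n, rfl⟩ := Int.exists_eq_neg_ofNat hj.le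
    have := hC₂ m n (by omega)
    push_cast at this hji' ⊢
    nlinarith [mul_le_mul_of_nonneg_right hβ₂' (sub_nonneg.2 hji')]
  · lift i to ℕ using hi.le
    obtain ⟨n, rfl⟩ := Int.exists_eq_neg_ofNat hj.le
    have h1 := hC₁ 0 i (Nat.zero_le _)
    have h2 := hC₂ 0 n (Nat.zero_le _)
    push_cast at h1 h2 ⊢
    simp only [neg_zero] at h2
    nlinarith

theorem Relation.ReflTransGen.exists_walk {α : Type*} {r : α → α → Prop} {a b : α}
    (h : ReflTransGen r a b) :
    ∃ (n : ℕ) (P : ℕ → α), P 0 = a ∧ P n = b ∧ ∀ i < n, r (P i) (P (i + 1)) := by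
  induction h using ReflTransGen.head_induction_on with
  | refl => exact ⟨0, fun _ => b, rfl, rfl, by simp⟩
  | @head a c hac _ ih =>
    obtain ⟨n, P, hP0, hPn, hP⟩ := ih
    refine ⟨n + 1, fun i => Nat.casesOn i a P, rfl, hPn, ?_⟩
    rintro (_ | i) hi
    · simpa [hP0] using hac
    · exact hP i (by omega)

section LoopErasure

variable {α : Type*} {w : ℕ → α}

variable (w) in
noncomputable def lastVisit (t : ℕ) : ℕ := sSup {s | w s = w t}

variable (w) in
noncomputable def loopEraseIndex (j : ℕ) : ℕ :=
  (fun t => lastVisit w (t + 1))^[j] (lastVisit w 0)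

variable (w) in
noncomputable def loopErase (j : ℕ) : α := w (loopEraseIndex w j)

theorem apply_lastVisit (hw : ∀ t, BddAbove {s | w s = w t}) (t : ℕ) :
    w (lastVisit w t) = w t :=
  Nat.sSup_mem (s := {s | w s = w t}) ⟨t, rfl⟩ (hw t)

theorem le_lastVisit (hw : ∀ t, BddAbove {s | w s = w t}) {s t : ℕ} (h : w s = w t) :
    s ≤ lastVisit w t :=
  le_csSup (hw t) h

theorem loopEraseIndex_succ (j : ℕ) :
    loopEraseIndex w (j + 1) = lastVisit w (loopEraseIndex w j + 1) :=
  iterate_succ_apply' _ _ _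

theorem loopErase_zero (hw : ∀ t, BddAbove {s | w s = w t}) : loopErase w 0 = w 0 :=
  apply_lastVisit hw 0

theorem loopErase_succ (hw : ∀ t, BddAbove {s | w s = w t}) (j : ℕ) :
    loopErase w (j + 1) = w (loopEraseIndex w j + 1) := by
  rw [loopErase, loopEraseIndex_succ, apply_lastVisit hw]

theorem strictMono_loopEraseIndex (hw : ∀ t, BddAbove {s | w s = w t}) :
    StrictMono (loopEraseIndex w) :=
  strictMono_nat_of_lt_succ fun j => by
    rw [loopEraseIndex_succ]
    exact Nat.lt_of_succ_le (le_lastVisit hw rfl)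

theorem le_loopEraseIndex (hw : ∀ t, BddAbove {s | w s = w t}) {s j : ℕ}
    (h : w s = loopErase w j) : s ≤ loopEraseIndex w j := by
  cases j with
  | zero => exact le_lastVisit hw (h.trans (loopErase_zero hw))
  | succ j =>
    rw [loopEraseIndex_succ]
    exact le_lastVisit hw (h.trans (loopErase_succ hw j))

theorem injective_loopErase (hw : ∀ t, BddAbove {s | w s = w t}) : Injective (loopErase w) := by
  intro a b hab
  by_contra hne
  rcases lt_or_gt_of_ne hne with h | h
  · exact (le_loopEraseIndex hw hab.symm).not_gt (strictMono_loopEraseIndex hw h)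
  · exact (le_loopEraseIndex hw hab).not_gt (strictMono_loopEraseIndex hw h)

end LoopErasure

section Rays

variable {V : Type*} {r : V → V → Prop} {f : V → V}

def periodicWalk (f : V → V) (P : ℕ → V) (p i : ℕ) : V := f^[i / p] (P (i % p))

theorem periodicWalk_add_period {P : ℕ → V} {p : ℕ} (hp : 0 < p) (i : ℕ) :
    periodicWalk f P p (i + p) = f (periodicWalk f P p i) := by
  simp only [periodicWalk, Nat.add_div_right i hp, Nat.add_mod_right, iterate_succ_apply']

theorem periodicWalk_of_lt {P : ℕ → V} {p i : ℕ} (hi : i < p) : periodicWalk f P p i = P i := by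
  simp [periodicWalk, Nat.div_eq_of_lt hi, Nat.mod_eq_of_lt hi]

theorem periodicWalk_rel (hf : ∀ a b, r a b → r (f a) (f b)) {P : ℕ → V} {p : ℕ} (hp : 0 < p)
    (hPp : P p = f (P 0)) (hP : ∀ i < p, r (P i) (P (i + 1))) (i : ℕ) :
    r (periodicWalk f P p i) (periodicWalk f P p (i + 1)) := by
  induction i using Nat.strong_induction_on with
  | _ i ih =>
    rcases lt_or_ge i p with hi | hi
    · rw [periodicWalk_of_lt hi]
      rcases lt_or_eq_of_le (Nat.succ_le_of_lt hi) with hi' | hi'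
      · rw [periodicWalk_of_lt hi']
        exact hP i hi
      · have hwp := periodicWalk_add_period (f := f) (P := P) hp 0
        rw [zero_add, periodicWalk_of_lt hp, ← hPp] at hwp
        rw [Nat.succ_eq_add_one] at hi'
        rw [hi', hwp, ← hi']
        exact hP i hi
    · obtain ⟨j, rfl⟩ := Nat.exists_eq_add_of_le' hi
      rw [add_right_comm, periodicWalk_add_period hp, periodicWalk_add_period hp]
      exact hf _ _ (ih j (by omega))

theorem exists_injective_ray (hf : ∀ a b, r a b → r (f a) (f b)) {η : V → ℝ}
    (hη : ∀ a, η (f a) = η a + 1) {L : ℝ} (hL : ∀ a b, r a b → |η b - η a| ≤ L) {u : V}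
    (hu : ReflTransGen r u (f u)) :
    ∃ x : ℕ → V, x 0 = u ∧ Injective x ∧ (∀ i, r (x i) (x (i + 1))) ∧
      LinearlyIncreasing (η ∘ x) := by
  obtain ⟨p, P, hP0, hPp, hP⟩ := hu.exists_walk
  have hp : 0 < p := by
    refine Nat.pos_of_ne_zero fun hp0 => ?_
    have := hη u
    rw [← hPp, hp0, hP0] at this
    linarith
  let w := periodicWalk f P p
  have hw : ∀ i, r (w i) (w (i + 1)) := periodicWalk_rel hf hp (by rw [hPp, hP0]) hP
  have hgrow : LinearlyIncreasing (η ∘ w) :=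
    linearlyIncreasing_of_add_period hp (fun i => by simp [w, periodicWalk_add_period hp, hη])
      (fun i => hL _ _ (hw i))
  have hbdd := hgrow.bddAbove_setOf_eq
  refine ⟨loopErase w, ?_, injective_loopErase hbdd, fun j => ?_,
    hgrow.comp_strictMono (strictMono_loopEraseIndex hbdd)⟩
  · rw [loopErase_zero hbdd]
    exact (periodicWalk_of_lt hp).trans hP0
  · rw [loopErase_succ hbdd]
    exact hw _

def spliceRays (x y : ℕ → V) (s t : ℕ) : ℤ → V
  | (n : ℕ) => x (s + n)
  | Int.negSucc n => y (t + (n + 1))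

theorem spliceRays_neg_natCast {x y : ℕ → V} {s t : ℕ} (h : x s = y t) (n : ℕ) :
    spliceRays x y s t (-n) = y (t + n) := by
  cases n with
  | zero => exact h
  | succ n => rfl

theorem exists_max_meeting {η : V → ℝ} {x y : ℕ → V} (h0 : x 0 = y 0)
    (hx : LinearlyIncreasing (η ∘ x)) (hy : LinearlyIncreasing fun n => -η (y n)) :
    ∃ s t, x s = y t ∧ ∀ s' t', x s' = y t' → s' + t' ≤ s + t := by
  obtain ⟨β₁, hβ₁, C₁, -, hC₁⟩ := hx
  obtain ⟨β₂, hβ₂, C₂, -, hC₂⟩ := hy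
  set I := {k | ∃ s t, s + t = k ∧ x s = y t}
  have hI : BddAbove I := by
    refine ⟨⌈(C₁ + C₂) / min β₁ β₂⌉₊, ?_⟩
    rintro _ ⟨s, t, rfl, hst⟩
    have h1 := hC₁ 0 s (Nat.zero_le _)
    have h2 := hC₂ 0 t (Nat.zero_le _)
    simp only [comp_apply, hst, h0] at h1 h2
    refine Nat.cast_le.1 (le_trans ?_ (Nat.le_ceil _))
    rw [le_div_iff₀ (lt_min hβ₁ hβ₂)]
    push_cast at h1 h2 ⊢
    nlinarith [min_le_left β₁ β₂, min_le_right β₁ β₂, (Nat.cast_nonneg s : (0 : ℝ) ≤ s),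
      (Nat.cast_nonneg t : (0 : ℝ) ≤ t)]
  obtain ⟨s, t, hst, hxy⟩ := Nat.sSup_mem (s := I) ⟨0, 0, 0, rfl, h0⟩ hI
  exact ⟨s, t, hxy, fun s' t' h => hst ▸ le_csSup hI ⟨s', t', rfl, h⟩⟩

theorem exists_splice {η : V → ℝ} {x y : ℕ → V} (h0 : x 0 = y 0)
    (hxi : Injective x) (hyi : Injective y) (hxr : ∀ n, r (x n) (x (n + 1)))
    (hyr : ∀ n, r (y n) (y (n + 1))) (hx : LinearlyIncreasing (η ∘ x))
    (hy : LinearlyIncreasing fun n => -η (y n)) :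
    ∃ v : ℤ → V, Injective v ∧ (∀ n : ℕ, r (v n) (v (n + 1)) ∧ r (v (-n)) (v (-n - 1))) ∧
      ∃ β > 0, ∃ C : ℝ, ∀ i j : ℤ, β * |(i : ℝ) - j| - C ≤ |η (v i) - η (v j)| := by
  obtain ⟨s, t, hst, hmax⟩ := exists_max_meeting h0 hx hy
  have hneg := spliceRays_neg_natCast hst
  have hmeet (m n : ℕ) (h : spliceRays x y s t m = spliceRays x y s t (-n)) : m = 0 ∧ n = 0 := by
    rw [hneg] at h
    have := hmax _ _ h
    omega
  refine ⟨spliceRays x y s t, ?_, fun n => ⟨hxr (s + n), ?_⟩,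
    exists_mul_abs_sub_le_abs_sub (hx.comp_add s) ?_⟩
  · intro i j hij
    obtain ⟨m, rfl | rfl⟩ := Int.eq_nat_or_neg i <;> obtain ⟨n, rfl | rfl⟩ := Int.eq_nat_or_neg j
    · exact congrArg _ (Nat.add_left_cancel (hxi hij))
    · obtain ⟨rfl, rfl⟩ := hmeet m n hij
      rfl
    · obtain ⟨rfl, rfl⟩ := hmeet n m hij.symm
      rfl
    · rw [hneg, hneg] at hij
      rw [Nat.add_left_cancel (hyi hij)]
  · rw [show -(n : ℤ) - 1 = -((n + 1 : ℕ) : ℤ) by push_cast; ring, hneg, hneg]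
    exact hyr (t + n)
  · simp only [hneg]
    exact hy.comp_add t

end Rays

theorem Subgroup.relIndex_mul_relIndex_mul_relIndex_comm {Γ : Type*} [Group Γ]
    (A B C : Subgroup Γ) (hCA : C.relIndex A ≠ 0) (hAB : A.relIndex B ≠ 0)
    (hBC : B.relIndex C ≠ 0) :
    B.relIndex A * C.relIndex B * A.relIndex C = A.relIndex B * B.relIndex C * C.relIndex A := by
  have e1 := relIndex_inf_mul_relIndex B C A
  have e2 := relIndex_inf_mul_relIndex C A B
  have e3 := relIndex_inf_mul_relIndex A B C
  have e1' := relIndex_inf_mul_relIndex C B A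
  have e2' := relIndex_inf_mul_relIndex A C B
  have e3' := relIndex_inf_mul_relIndex B A C
  rw [inf_comm C B, inf_comm B A] at e1'
  rw [inf_comm C B, inf_comm A C] at e2'
  rw [inf_comm A C, inf_comm B A] at e3'
  have hX : B.relIndex (C ⊓ A) * C.relIndex (A ⊓ B) * A.relIndex (B ⊓ C) ≠ 0 := by
    refine mul_ne_zero (mul_ne_zero ?_ ?_) ?_ <;>
      exact mt (relIndex_eq_zero_of_le_right inf_le_left) ‹_›
  -- multiplied by `hX`'s product, both sides become `[A : B ⊓ C] [B : C ⊓ A] [C : A ⊓ B]`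
  apply mul_left_cancel₀ hX
  calc _ = (C.relIndex (A ⊓ B) * B.relIndex A) * (A.relIndex (B ⊓ C) * C.relIndex B) *
        (B.relIndex (C ⊓ A) * A.relIndex C) := by ring
    _ = (B.relIndex (C ⊓ A) * C.relIndex A) * (C.relIndex (A ⊓ B) * A.relIndex B) *
        (A.relIndex (B ⊓ C) * B.relIndex C) := by rw [e1', e2', e3', e1, e2, e3]
    _ = _ := by ring

namespace MulAction

variable (Γ : Type*) {X : Type*} [Group Γ] [MulAction Γ X]

theorem relIndex_stabilizer_eq_card_orbit (x y : X) :
    (stabilizer Γ y).relIndex (stabilizer Γ x) = Nat.card (orbit (stabilizer Γ x) y) := by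
  have key : (stabilizer Γ y).subgroupOf (stabilizer Γ x) = stabilizer (stabilizer Γ x) y := by
    ext; rfl
  rw [Subgroup.relIndex, key, index_stabilizer, Nat.card_coe_set_eq]

-- `modularLog Γ x y = log (M x / M y)` for the weight function `M`, since
-- `|stab(x) y| = [stab x : stab x ⊓ stab y]`.
noncomputable def modularLog (x y : X) : ℝ :=
  Real.log ((stabilizer Γ y).relIndex (stabilizer Γ x)) -
    Real.log ((stabilizer Γ x).relIndex (stabilizer Γ y))

variable {Γ}

theorem relIndex_stabilizer_ne_zero {x y : X} (hfin : (orbit (stabilizer Γ x) y).Finite) :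
    (stabilizer Γ y).relIndex (stabilizer Γ x) ≠ 0 := by
  rw [relIndex_stabilizer_eq_card_orbit]
  have := hfin.to_subtype
  have : Nonempty (orbit (stabilizer Γ x) y) := ⟨⟨y, mem_orbit_self y⟩⟩
  exact Nat.card_pos.ne'

theorem modularLog_smul (g : Γ) (x y : X) : modularLog Γ (g • x) (g • y) = modularLog Γ x y := by
  simp only [modularLog, stabilizer_smul_eq_stabilizer_map_conj,
    Subgroup.relIndex_map_map_of_injective (f := (MulAut.conj g).toMonoidHom) _ _
      (MulAut.conj g).injective]

theorem modularLog_add_modularLog (hfin : ∀ x y : X, (orbit (stabilizer Γ x) y).Finite)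
    (x y z : X) : modularLog Γ x y + modularLog Γ y z = modularLog Γ x z := by
  have hne a b := relIndex_stabilizer_ne_zero (hfin a b)
  have hlog : ∀ {a b c : ℕ}, a ≠ 0 → b ≠ 0 → c ≠ 0 →
      Real.log ((a * b * c : ℕ) : ℝ) = Real.log a + Real.log b + Real.log c := fun ha hb hc => by
    push_cast
    rw [Real.log_mul (by positivity) (by positivity), Real.log_mul (by positivity) (by positivity)]
  have h := congrArg (fun n : ℕ => Real.log n)
    (Subgroup.relIndex_mul_relIndex_mul_relIndex_comm (stabilizer Γ x) (stabilizer Γ y)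
      (stabilizer Γ z) (hne x z) (hne y x) (hne z y))
  simp only [hlog (hne _ _) (hne _ _) (hne _ _)] at h
  simp only [modularLog]
  linarith

end MulAction

namespace Dgraph

open MulAction

variable {G : Dgraph}

theorem Aut.ext {φ ψ : G.Aut} (hv : φ.vmap = ψ.vmap) (he : φ.emap = ψ.emap) : φ = ψ := by
  cases φ; cases ψ; simp_all

instance : Group G.Aut where
  mul φ ψ := ⟨ψ.vmap.trans φ.vmap, ψ.emap.trans φ.emap,
    fun e => by simp [φ.src_eq, ψ.src_eq],
    fun e => by simp [φ.tgt_eq, ψ.tgt_eq]⟩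
  one := ⟨Equiv.refl _, Equiv.refl _, fun _ => rfl, fun _ => rfl⟩
  inv φ := ⟨φ.vmap.symm, φ.emap.symm,
    fun e => φ.vmap.injective (by rw [Equiv.apply_symm_apply, ← φ.src_eq, Equiv.apply_symm_apply]),
    fun e => φ.vmap.injective (by rw [Equiv.apply_symm_apply, ← φ.tgt_eq, Equiv.apply_symm_apply])⟩
  mul_assoc _ _ _ := rfl
  one_mul _ := rfl
  mul_one _ := rfl
  inv_mul_cancel φ := Aut.ext (Equiv.self_trans_symm φ.vmap) (Equiv.self_trans_symm φ.emap)

instance : MulAction G.Aut G.V where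
  smul φ v := φ.vmap v
  one_smul _ := rfl
  mul_smul _ _ _ := rfl

theorem Adj.smul {x y : G.V} (h : G.Adj x y) (g : G.Aut) : G.Adj (g • x) (g • y) := by
  obtain ⟨e, rfl, rfl⟩ := h
  exact ⟨g.emap e, g.src_eq e, g.tgt_eq e⟩

theorem finite_setOf_adj (hlf : G.LocallyFinite) (x : G.V) : {y | G.Adj x y}.Finite :=
  ((hlf x).1.image G.tgt).subset fun _ ⟨e, he, hy⟩ => ⟨e, he, hy⟩

theorem finite_orbit_stabilizer (hlf : G.LocallyFinite) (hsc : G.StronglyConnected)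
    (x w : G.V) : (orbit (stabilizer G.Aut x) w).Finite := by
  induction hsc x w with
  | refl => exact (Set.finite_singleton x).subset (by rintro _ ⟨g, rfl⟩; exact g.2)
  | tail _ hbc ih =>
    refine (ih.biUnion fun b _ => finite_setOf_adj hlf b).subset ?_
    rintro _ ⟨g, rfl⟩
    exact Set.mem_biUnion (mem_orbit _ g) (hbc.smul g)

theorem stabOrbit_eq_orbit (x y : G.V) : G.stabOrbit x y = orbit (stabilizer G.Aut x) y := by
  ext w
  exact ⟨fun ⟨φ, h1, h2⟩ => ⟨⟨φ, h1⟩, h2⟩, fun ⟨φ, h⟩ => ⟨φ, φ.2, h⟩⟩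

theorem exists_modularLog_ne_zero (hlf : G.LocallyFinite) (hsc : G.StronglyConnected)
    (hnu : ¬ G.Unimodular) : ∃ (φ : G.Aut) (u : G.V), modularLog G.Aut (φ • u) u ≠ 0 := by
  simp only [Unimodular, not_forall] at hnu
  obtain ⟨u, _, ⟨φ, rfl⟩, hne⟩ := hnu
  refine ⟨φ, u, fun h => hne ?_⟩
  have hpos : ∀ x y : G.V, (0 : ℝ) < (stabilizer G.Aut y).relIndex (stabilizer G.Aut x) :=
    fun x y => Nat.cast_pos.2 (Nat.pos_of_ne_zero
      (relIndex_stabilizer_ne_zero (finite_orbit_stabilizer hlf hsc x y)))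
  rw [modularLog, sub_eq_zero] at h
  simp only [stabOrbit_eq_orbit, ← relIndex_stabilizer_eq_card_orbit]
  exact_mod_cast (Real.log_injOn_pos (hpos _ _) (hpos _ _) h).symm

theorem exists_forall_adj_le (hlf : G.LocallyFinite) (hqt : G.QuasiTransitive)
    (F : G.V → G.V → ℝ) (hF : ∀ (g : G.Aut) x y, F (g • x) (g • y) = F x y) :
    ∃ L, ∀ x y, G.Adj x y → F x y ≤ L := by
  obtain ⟨S, hS⟩ := hqt
  obtain ⟨L, hL⟩ :=
    (S.finite_toSet.biUnion fun s _ => (finite_setOf_adj hlf s).image (F s)).bddAbove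
  refine ⟨L, fun x y hxy => hL ?_⟩
  obtain ⟨s, hs, g, rfl⟩ := hS x
  refine Set.mem_biUnion hs ⟨g⁻¹ • y, ?_, ?_⟩
  · have := hxy.smul g⁻¹
    rwa [show g.vmap s = g • s from rfl, inv_smul_smul] at this
  · rw [← hF g, smul_inv_smul]
    rfl

theorem exists_height_of_not_unimodular (hlf : G.LocallyFinite) (hsc : G.StronglyConnected)
    (hqt : G.QuasiTransitive) (hnu : ¬ G.Unimodular) :
    ∃ (φ : G.Aut) (η : G.V → ℝ) (L : ℝ),
      (∀ x, η (φ • x) = η x + 1) ∧ ∀ x y, G.Adj x y → |η x - η y| ≤ L := by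
  have hcoc := modularLog_add_modularLog (finite_orbit_stabilizer hlf hsc)
  obtain ⟨φ, u, hκ⟩ := exists_modularLog_ne_zero hlf hsc hnu
  obtain ⟨L, hL⟩ := exists_forall_adj_le hlf hqt (fun x y => |modularLog G.Aut x y|)
    fun g x y => by simp only [modularLog_smul]
  set κ := modularLog G.Aut (φ • u) u
  refine ⟨φ, fun x => modularLog G.Aut x u / κ, L / |κ|, fun x => ?_, fun x y hxy => ?_⟩
  · dsimp only
    rw [← hcoc _ (φ • u), modularLog_smul]
    field_simp
    rfl
  · dsimp only
    rw [div_sub_div_same, ← hcoc x y u, add_sub_cancel_right, abs_div]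
    exact div_le_div_of_nonneg_right (hL x y hxy) (abs_nonneg κ)

theorem exists_walk_udist (hsc : G.StronglyConnected) (x y : G.V) :
    ∃ f : Fin (G.udist x y + 1) → G.V, f 0 = x ∧ f (Fin.last _) = y ∧
      ∀ i : Fin (G.udist x y),
        G.Adj (f i.castSucc) (f i.succ) ∨ G.Adj (f i.succ) (f i.castSucc) := by
  obtain ⟨n, P, h0, hn, hP⟩ := (hsc x y).exists_walk
  exact Nat.sInf_mem (s := {n | ∃ f : Fin (n + 1) → G.V, f 0 = x ∧ f (Fin.last n) = y ∧
      ∀ i : Fin n, G.Adj (f i.castSucc) (f i.succ) ∨ G.Adj (f i.succ) (f i.castSucc)})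
    ⟨n, fun i => P i, h0, hn, fun i => Or.inl (hP i i.2)⟩

theorem eq_of_udist_eq_zero (hsc : G.StronglyConnected) {x y : G.V} (h : G.udist x y = 0) :
    x = y := by
  obtain ⟨f, h0, hl, -⟩ := exists_walk_udist hsc x y
  calc x = f 0 := h0.symm
    _ = f (Fin.last _) := congrArg f (Fin.ext (by simp [h]))
    _ = y := hl

theorem abs_sub_le_mul_udist (hsc : G.StronglyConnected) {η : G.V → ℝ} {L : ℝ}
    (hL : ∀ x y, G.Adj x y → |η x - η y| ≤ L) (x y : G.V) : |η x - η y| ≤ L * G.udist x y := by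
  obtain ⟨f, h0, hl, hf⟩ := exists_walk_udist hsc x y
  have key : ∀ k (hk : k < G.udist x y + 1), |η x - η (f ⟨k, hk⟩)| ≤ L * k := by
    intro k
    induction k with
    | zero => intro hk; simp [← h0]
    | succ k ih =>
      intro hk
      have hstep : |η (f ⟨k, by omega⟩) - η (f ⟨k + 1, hk⟩)| ≤ L := by
        rcases hf ⟨k, by omega⟩ with h | h
        · exact hL _ _ h
        · rw [abs_sub_comm]
          exact hL _ _ h
      calc _ ≤ |η x - η (f ⟨k, by omega⟩)| + |η (f ⟨k, by omega⟩) - η (f ⟨k + 1, hk⟩)| :=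
            abs_sub_le _ _ _
        _ ≤ L * k + L := add_le_add (ih _) hstep
        _ = L * (k + 1 : ℕ) := by push_cast; ring
  have := key _ (Nat.lt_succ_self _)
  rwa [show (⟨G.udist x y, _⟩ : Fin _) = Fin.last _ from rfl, hl] at this

theorem exists_mul_abs_le_udist (hsc : G.StronglyConnected) {η : G.V → ℝ} {L : ℝ}
    (hL : ∀ x y, G.Adj x y → |η x - η y| ≤ L) {v : ℤ → G.V} (hv : Injective v) {β C : ℝ}
    (hβ : 0 < β) (hgrow : ∀ i j : ℤ, β * |(i : ℝ) - j| - C ≤ |η (v i) - η (v j)|) :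
    ∃ α : ℝ, 0 < α ∧ ∀ i j : ℤ, α * (|i - j| : ℤ) ≤ (G.udist (v i) (v j) : ℝ) := by
  have hC : 0 ≤ C := by simpa using hgrow 0 0
  -- distinct vertices are at distance at least `1`, which absorbs the additive constant `C`
  refine ⟨β / (|L| + C + 1), by positivity, fun i j => ?_⟩
  rcases eq_or_ne i j with rfl | hij
  · simp
  have hd : (1 : ℝ) ≤ G.udist (v i) (v j) := by
    have : G.udist (v i) (v j) ≠ 0 := fun h => hij (hv (eq_of_udist_eq_zero hsc h))
    exact_mod_cast Nat.one_le_iff_ne_zero.2 this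
  have h1 := (hgrow i j).trans (abs_sub_le_mul_udist hsc hL _ _)
  have h2 := mul_le_mul_of_nonneg_right (le_abs_self L) (zero_le_one.trans hd)
  rw [Int.cast_abs, Int.cast_sub, div_mul_eq_mul_div, div_le_iff₀ (by positivity)]
  nlinarith [mul_le_mul_of_nonneg_left hd hC]

end Dgraph

theorem exists_quasi_geodesic_of_not_unimodular_general (G : Dgraph)
    (hlf : G.LocallyFinite) (hsc : G.StronglyConnected) (hqt : G.QuasiTransitive)
    (hnu : ¬ G.Unimodular) :
    ∃ α : ℝ, 0 < α ∧ ∃ v : ℤ → G.V,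
      (∀ i j : ℤ, α * (|i - j| : ℤ) ≤ (G.udist (v i) (v j) : ℝ)) ∧
      ∀ i : ℕ,
        (∃ e : G.E, G.src e = v ((i : ℤ) + 1) ∧ G.tgt e = v (i : ℤ)) ∧
        (∃ e : G.E, G.src e = v (-(i : ℤ) - 1) ∧ G.tgt e = v (-(i : ℤ))) := by
  obtain ⟨u, -⟩ := not_forall.1 hnu
  obtain ⟨φ, η, L, hφ, hL⟩ := G.exists_height_of_not_unimodular hlf hsc hqt hnu
  -- the rays are built for the reversed relation, so that their edges point towards `u`
  have hf (g : G.Aut) (a b : G.V) (h : flip G.Adj a b) : flip G.Adj (g • a) (g • b) := h.smul g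
  have hpath (g : G.Aut) : ReflTransGen (flip G.Adj) u (g • u) := reflTransGen_swap.2 (hsc _ _)
  obtain ⟨x, hx0, hxi, hxr, hxη⟩ :=
    exists_injective_ray (hf φ) hφ (fun a b h => hL b a h) (hpath φ)
  obtain ⟨y, hy0, hyi, hyr, hyη⟩ := exists_injective_ray (η := fun a => -η a) (hf φ⁻¹)
    (fun a => by linarith [smul_inv_smul φ a ▸ hφ (φ⁻¹ • a)])
    (fun a b h => by rw [neg_sub_neg, abs_sub_comm]; exact hL b a h) (hpath φ⁻¹)
  obtain ⟨v, hvi, hvr, β, hβ, C, hgrow⟩ :=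
    exists_splice (hx0.trans hy0.symm) hxi hyi hxr hyr hxη hyη
  obtain ⟨α, hα, hdist⟩ := G.exists_mul_abs_le_udist hsc hL hvi hβ hgrow
  exact ⟨α, hα, v, hdist, hvr⟩

/-- a non-unimodular quasi-transitive graph contains an α-quasi-geodesic
`(v_i)_{i ∈ ℤ}` with directed edges from `v_{i+1}` to `v_i` and from `v_{-i-1}` to
`v_{-i}` for all `i ≥ 0`. -/
theorem exists_quasi_geodesic_of_not_unimodular (G : Dgraph) (hinf : Infinite G.V)
    (hlf : G.LocallyFinite) (hsc : G.StronglyConnected) (hqt : G.QuasiTransitive)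
    (hnu : ¬ G.Unimodular) :
    ∃ α : ℝ, 0 < α ∧ ∃ v : ℤ → G.V,
      (∀ i j : ℤ, α * (|i - j| : ℤ) ≤ (G.udist (v i) (v j) : ℝ)) ∧
      ∀ i : ℕ,
        (∃ e : G.E, G.src e = v ((i : ℤ) + 1) ∧ G.tgt e = v (i : ℤ)) ∧
        (∃ e : G.E, G.src e = v (-(i : ℤ) - 1) ∧ G.tgt e = v (-(i : ℤ))) :=
  exists_quasi_geodesic_of_not_unimodular_general G hlf hsc hqt hnu
end
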